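/- arXiv:2412.03134 — 5 statements merged into one kernel-verified Lean document; each statement's English description precedes it below -/
import Mathlib

section
/- (Lemma 1 of the paper.) Fix t with 2 ≤ t ≤ T and vectors x_0, ε_0, ξ ∈ ℝ^n and a scalar σ_0 ∈ ℝ, and set x_t = √ᾱ_t · x_0 + √(1−ᾱ_t) · (σ_0 ε_0 + ψ_t ξ). Define μ̃_t(x_t, x_0, ξ) = (√α_t (1−ᾱ_{t−1})/(1−ᾱ_t)) x_t + ((1−α_t)√ᾱ_{t−1}/(1−ᾱ_t)) x_0 + ν_t ξ. Then μ̃_t(x_t, x_0, ξ) = (1/√α_t) x_t − ((1−α_t)/(√(1−ᾱ_t) √α_t)) (σ_0 ε_0 + φ_t ξ). -/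
open Finset

/-! The ψ-weights satisfy the one-step recursion
`√(1-ᾱ_t) ψ_t = √α_t (√(1-ᾱ_{t-1}) ψ_{t-1} + γ_t)`, because `ᾱ_t = ᾱ_{t-1} α_t`. Substituting it
into `x_t`, the identity becomes one linear relation per vector `x₀`, `ε₀`, `ξ`; each coefficient
identity reduces to `1 - ᾱ_t = α_t (1 - ᾱ_{t-1}) + (1 - α_t)`. -/

theorem prod_range_succ_mem_Ioo {α : ℕ → ℝ} {u : ℕ} (hu : 1 ≤ u) (hα0 : α 0 = 1)
    (hα : ∀ i, 1 ≤ i → i ≤ u → α i ∈ Set.Ioo 0 1) :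
    ∏ i ∈ range (u + 1), α i ∈ Set.Ioo 0 1 := by
  have hmem : ∀ i ∈ range (u + 1), α i ∈ Set.Ioc 0 1 := by
    intro i hi
    rcases Nat.eq_zero_or_pos i with rfl | hi0
    · simp [hα0]
    · exact Set.Ioo_subset_Ioc_self (hα i hi0 (Nat.lt_succ_iff.mp (mem_range.mp hi)))
  have hprefix : ∏ i ∈ range u, α i ≤ 1 :=
    prod_le_one (fun i hi => (hmem i (range_mono u.le_succ hi)).1.le)
      (fun i hi => (hmem i (range_mono u.le_succ hi)).2)
  refine ⟨prod_pos fun i hi => (hmem i hi).1, ?_⟩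
  rw [prod_range_succ]
  exact mul_lt_one_of_nonneg_of_lt_one_right hprefix (hα u hu le_rfl).1.le (hα u hu le_rfl).2

theorem sum_Icc_sqrt_div_mul_succ {αbar α γ : ℕ → ℝ} {s : ℕ}
    (hrec : αbar (s + 1) = αbar s * α (s + 1)) (hα : 0 ≤ α (s + 1)) (hαbar : αbar s ≠ 0) :
    ∑ i ∈ Icc 1 (s + 1), √(αbar (s + 1) / αbar (i - 1)) * γ i
      = √(α (s + 1)) * (∑ i ∈ Icc 1 s, √(αbar s / αbar (i - 1)) * γ i + γ (s + 1)) := by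
  have hfactor : ∀ i, √(αbar (s + 1) / αbar i) = √(α (s + 1)) * √(αbar s / αbar i) := by
    intro i
    rw [← Real.sqrt_mul hα, hrec]
    ring_nf
  rw [sum_Icc_succ_top (by omega), Nat.add_sub_cancel, hrec, mul_div_cancel_left₀ _ hαbar,
    mul_add, mul_sum]
  simp only [← hrec, hfactor, mul_assoc]

theorem sqrt_one_sub_mul_succ_eq {αbar α γ ψ : ℕ → ℝ} {s : ℕ}
    (hψ : ∀ t, 1 ≤ t → ψ t = (1 / √(1 - αbar t)) *
      ∑ i ∈ Icc 1 t, √(αbar t / αbar (i - 1)) * γ i)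
    (hs : 1 ≤ s) (hrec : αbar (s + 1) = αbar s * α (s + 1)) (hα : 0 ≤ α (s + 1))
    (hαbar : αbar s ≠ 0) (hαbar_lt : αbar s < 1) (hαbar_succ_lt : αbar (s + 1) < 1) :
    √(1 - αbar (s + 1)) * ψ (s + 1) = √(α (s + 1)) * (√(1 - αbar s) * ψ s + γ (s + 1)) := by
  have hpos : 0 < √(1 - αbar s) := Real.sqrt_pos.mpr (by linarith)
  have hpos_succ : 0 < √(1 - αbar (s + 1)) := Real.sqrt_pos.mpr (by linarith)
  rw [hψ (s + 1) (by omega), hψ s hs, sum_Icc_sqrt_div_mul_succ hrec hα hαbar]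
  field_simp

/-- In the application `a = α_t`, `b = ᾱ_t`, `b' = ᾱ_{t-1}`, `ψ' = ψ_{t-1}` and `g = γ_t`. -/
theorem posterior_mean_eq_denoising_form {E : Type*} [AddCommGroup E] [Module ℝ E]
    {a b b' σ ψ ψ' g : ℝ} (ha : 0 < a) (ha1 : a < 1) (hb'1 : b' < 1)
    (hb : b = b' * a) (hψ : √(1 - b) * ψ = √a * (√(1 - b') * ψ' + g)) (x₀ ε ξ : E) :
    (√a * (1 - b') / (1 - b)) • (√b • x₀ + √(1 - b) • (σ • ε + ψ • ξ))
        + ((1 - a) * √b' / (1 - b)) • x₀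
        + (((1 - a) * √(1 - b') * ψ' - a * (1 - b') * g) / (1 - b)) • ξ
      = (1 / √a) • (√b • x₀ + √(1 - b) • (σ • ε + ψ • ξ))
        - ((1 - a) / (√(1 - b) * √a)) • (σ • ε + (√a * √(1 - b) / (1 - a) * g) • ξ) := by
  have hb1 : b < 1 := by nlinarith
  have hsa : √a ^ 2 = a := Real.sq_sqrt ha.le
  have hsb : √(1 - b) ^ 2 = 1 - b := Real.sq_sqrt (by linarith)
  have hsqrt_b : √b = √a * √b' := by rw [hb, mul_comm, Real.sqrt_mul ha.le]
  have : 0 < √a := Real.sqrt_pos.mpr ha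
  have : 0 < √(1 - b) := Real.sqrt_pos.mpr (by linarith)
  have : 1 - b ≠ 0 := by linarith
  have : 1 - a ≠ 0 := by linarith
  match_scalars
  · rw [hsqrt_b]
    field_simp
    rw [hsa]
    linear_combination √b' * hb
  · field_simp
    rw [hsa, hsb]
    linear_combination (1 - b) * σ * hb
  · have hψ_eq : ψ = √a * (√(1 - b') * ψ' + g) / √(1 - b) := by
      field_simp
      linarith
    rw [hψ_eq]
    field_simp
    rw [hsa]
    linear_combination √(1 - b') * ψ' * hb

/-- Lemma 1 of the paper: the posterior mean μ̃_t(x_t, x_0, ξ) can be rewritten as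
(1/√α_t) x_t − ((1−α_t)/(√(1−ᾱ_t)√α_t)) (σ_0 ε_0 + φ_t ξ). -/
theorem tilde_mu_denoising_form
    (T n : ℕ) (β α αbar γ φ ψ ν : ℕ → ℝ)
    (hβ : ∀ t, 1 ≤ t → t ≤ T → 0 < β t ∧ β t < 1)
    (hα0 : α 0 = 1)
    (hα : ∀ t, 1 ≤ t → α t = 1 - β t)
    (hαbar : ∀ t, αbar t = ∏ i ∈ Finset.range (t + 1), α i)
    (hφ : ∀ t, 1 ≤ t →
      φ t = Real.sqrt (α t) * Real.sqrt (1 - αbar t) / (1 - α t) * γ t)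
    (hψ : ∀ t, 1 ≤ t → ψ t = (1 / Real.sqrt (1 - αbar t)) *
      ∑ i ∈ Finset.Icc 1 t, Real.sqrt (αbar t / αbar (i - 1)) * γ i)
    (hν : ∀ t, 2 ≤ t → ν t =
      ((1 - α t) * Real.sqrt (1 - αbar (t - 1)) * ψ (t - 1)
        - α t * (1 - αbar (t - 1)) * γ t) / (1 - αbar t))
    (t : ℕ) (ht2 : 2 ≤ t) (htT : t ≤ T)
    (x₀ ε₀ ξ : EuclideanSpace ℝ (Fin n)) (σ₀ : ℝ)
    (xt : EuclideanSpace ℝ (Fin n))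
    (hxt : xt = Real.sqrt (αbar t) • x₀
      + Real.sqrt (1 - αbar t) • (σ₀ • ε₀ + ψ t • ξ))
    (μt : EuclideanSpace ℝ (Fin n))
    (hμt : μt = (Real.sqrt (α t) * (1 - αbar (t - 1)) / (1 - αbar t)) • xt
      + ((1 - α t) * Real.sqrt (αbar (t - 1)) / (1 - αbar t)) • x₀
      + ν t • ξ) :
    μt = (1 / Real.sqrt (α t)) • xt
      - ((1 - α t) / (Real.sqrt (1 - αbar t) * Real.sqrt (α t))) •
        (σ₀ • ε₀ + φ t • ξ) := by
  have hα_mem : ∀ i, 1 ≤ i → i ≤ T → α i ∈ Set.Ioo 0 1 := fun i hi hiT => by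
    rw [hα i hi]
    constructor <;> linarith [hβ i hi hiT]
  have hαbar_mem : ∀ u, 1 ≤ u → u ≤ T → αbar u ∈ Set.Ioo 0 1 := fun u hu huT => by
    rw [hαbar]
    exact prod_range_succ_mem_Ioo hu hα0 fun i hi hiu => hα_mem i hi (hiu.trans huT)
  obtain ⟨s, rfl⟩ : ∃ s, t = s + 1 := ⟨t - 1, by omega⟩
  have hs : 1 ≤ s := by omega
  have hrec : αbar (s + 1) = αbar s * α (s + 1) := by rw [hαbar, prod_range_succ, ← hαbar]
  obtain ⟨ha, ha1⟩ := hα_mem (s + 1) (by omega) htT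
  obtain ⟨hαbar_pos, hαbar_lt⟩ := hαbar_mem s hs (by omega)
  have hψ_succ := sqrt_one_sub_mul_succ_eq hψ hs hrec ha.le hαbar_pos.ne' hαbar_lt
    (hαbar_mem (s + 1) (by omega) htT).2
  rw [hμt, hxt, hν (s + 1) (by omega), hφ (s + 1) (by omega)]
  simp only [Nat.add_sub_cancel]
  exact posterior_mean_eq_denoising_form ha ha1 hαbar_lt hrec hψ_succ x₀ ε₀ ξ
end

section
/- (Proposition 2 of the paper.) Suppose the coefficients γ_1,…,γ_T satisfy φ_t = ψ_t for all t = 2,…,T. Then ν_t = 0 for all t = 2,…,T, and consequently for all vectors x_t, x_0, ξ ∈ ℝ^n the posterior mean μ̃_t(x_t, x_0, ξ) = (√α_t (1−ᾱ_{t−1})/(1−ᾱ_t)) x_t + ((1−α_t)√ᾱ_{t−1}/(1−ᾱ_t)) x_0 + ν_t ξ does not depend on ξ and equals the standard DDPM posterior mean (√α_t (1−ᾱ_{t−1})/(1−ᾱ_t)) x_t + ((1−α_t)√ᾱ_{t−1}/(1−ᾱ_t)) x_0. -/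
/-!
Writing `S_t = √(1 - ᾱ_t) ψ_t = ∑_{i ≤ t} √(ᾱ_t / ᾱ_{i-1}) γ_i`, the relation `ᾱ_t = α_t ᾱ_{t-1}`
gives the recursion `S_t = √α_t (S_{t-1} + γ_t)`. Substituting it into `φ_t = ψ_t` and clearing
the square roots leaves `(1 - α_t) S_{t-1} = α_t (1 - ᾱ_{t-1}) γ_t`, which says exactly that the
numerator of `ν_t` vanishes.
-/

open Finset

theorem prod_range_mem_Ioo {α : ℕ → ℝ} {t : ℕ} (h0 : α 0 = 1)
    (h : ∀ i ∈ Icc 1 t, α i ∈ Set.Ioo 0 1) (ht : 1 ≤ t) :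
    ∏ i ∈ range (t + 1), α i ∈ Set.Ioo 0 1 := by
  induction t, ht using Nat.le_induction with
  | base => simp_all [prod_range_succ]
  | succ s hs ih =>
    obtain ⟨hpos, hlt⟩ := ih fun i hi => h i (Icc_subset_Icc_right s.le_succ hi)
    obtain ⟨hapos, halt⟩ := h (s + 1) (by simp)
    rw [prod_range_succ]
    exact ⟨mul_pos hpos hapos, mul_lt_one_of_nonneg_of_lt_one_left hpos.le hlt halt.le⟩

/-- `√(1 - ᾱ_t) ψ_t` in the paper's notation. -/
noncomputable def sqrtRatioSum (αbar γ : ℕ → ℝ) (t : ℕ) : ℝ :=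
  ∑ i ∈ Icc 1 t, √(αbar t / αbar (i - 1)) * γ i

theorem sqrtRatioSum_succ {αbar γ : ℕ → ℝ} {a : ℝ} {s : ℕ} (ha : 0 ≤ a)
    (hrec : αbar (s + 1) = a * αbar s) (hs : αbar s ≠ 0) :
    sqrtRatioSum αbar γ (s + 1) = √a * (sqrtRatioSum αbar γ s + γ (s + 1)) := by
  have hlast : √(αbar (s + 1) / αbar s) = √a := by rw [hrec, mul_div_cancel_right₀ _ hs]
  have hterm : ∀ i ∈ Icc 1 s, √(αbar (s + 1) / αbar (i - 1)) * γ i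
      = √a * (√(αbar s / αbar (i - 1)) * γ i) := fun i _ => by
    rw [hrec, mul_div_assoc, Real.sqrt_mul ha, mul_assoc]
  rw [sqrtRatioSum, sum_Icc_succ_top (by omega), sum_congr rfl hterm, ← mul_sum,
    Nat.add_sub_cancel, hlast, sqrtRatioSum, mul_add]

theorem mul_sum_eq_of_balanced {a b S g : ℝ} (ha : 0 < a) (ha1 : a < 1) (hab : 0 < 1 - a * b)
    (h : √a * √(1 - a * b) / (1 - a) * g = 1 / √(1 - a * b) * (√a * (S + g))) :
    (1 - a) * S = a * (1 - b) * g := by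
  have h1a : 1 - a ≠ 0 := by linarith
  field_simp at h
  rw [Real.sq_sqrt hab.le] at h
  linear_combination -h

/-- Proposition 2 of the paper: under the balanced-φ,ψ condition φ_t = ψ_t (2 ≤ t ≤ T),
one has ν_t = 0 and the posterior mean μ̃_t does not depend on ξ, coinciding with the
standard DDPM posterior mean. -/
theorem balanced_implies_nu_zero
    (T n : ℕ) (β α αbar γ φ ψ ν : ℕ → ℝ)
    (hβ : ∀ t, 1 ≤ t → t ≤ T → 0 < β t ∧ β t < 1)
    (hα0 : α 0 = 1)
    (hα : ∀ t, 1 ≤ t → α t = 1 - β t)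
    (hαbar : ∀ t, αbar t = ∏ i ∈ Finset.range (t + 1), α i)
    (hφ : ∀ t, 1 ≤ t →
      φ t = Real.sqrt (α t) * Real.sqrt (1 - αbar t) / (1 - α t) * γ t)
    (hψ : ∀ t, 1 ≤ t → ψ t = (1 / Real.sqrt (1 - αbar t)) *
      ∑ i ∈ Finset.Icc 1 t, Real.sqrt (αbar t / αbar (i - 1)) * γ i)
    (hν : ∀ t, 2 ≤ t → ν t =
      ((1 - α t) * Real.sqrt (1 - αbar (t - 1)) * ψ (t - 1)
        - α t * (1 - αbar (t - 1)) * γ t) / (1 - αbar t))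
    (hbal : ∀ t, 2 ≤ t → t ≤ T → φ t = ψ t) :
    ∀ t, 2 ≤ t → t ≤ T → (ν t = 0 ∧
      ∀ xt x₀ ξ : EuclideanSpace ℝ (Fin n),
        (Real.sqrt (α t) * (1 - αbar (t - 1)) / (1 - αbar t)) • xt
          + ((1 - α t) * Real.sqrt (αbar (t - 1)) / (1 - αbar t)) • x₀
          + ν t • ξ
        = (Real.sqrt (α t) * (1 - αbar (t - 1)) / (1 - αbar t)) • xt
          + ((1 - α t) * Real.sqrt (αbar (t - 1)) / (1 - αbar t)) • x₀) := by
  intro t ht2 htT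
  obtain ⟨s, rfl⟩ : ∃ s, t = s + 1 := ⟨t - 1, by omega⟩
  have hαIoo : ∀ i ∈ Icc 1 T, α i ∈ Set.Ioo 0 1 := fun i hi => by
    obtain ⟨hi1, hiT⟩ := mem_Icc.mp hi
    rw [hα i hi1]
    constructor <;> linarith [hβ i hi1 hiT]
  obtain ⟨ha, ha1⟩ := hαIoo (s + 1) (mem_Icc.mpr ⟨by omega, htT⟩)
  obtain ⟨hb, hb1⟩ : αbar s ∈ Set.Ioo 0 1 := hαbar s ▸
    prod_range_mem_Ioo hα0 (fun i hi => hαIoo i (Icc_subset_Icc_right (by omega) hi)) (by omega)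
  have hrec : αbar (s + 1) = α (s + 1) * αbar s := by rw [hαbar, hαbar, prod_range_succ, mul_comm]
  have hab : 0 < 1 - α (s + 1) * αbar s := by nlinarith
  have hkey : (1 - α (s + 1)) * sqrtRatioSum αbar γ s
      = α (s + 1) * (1 - αbar s) * γ (s + 1) := by
    apply mul_sum_eq_of_balanced ha ha1 hab
    have := hbal (s + 1) ht2 htT
    rwa [hφ _ (by omega), hψ _ (by omega), ← sqrtRatioSum, sqrtRatioSum_succ ha.le hrec hb.ne',
      hrec] at this
  have hψs : √(1 - αbar s) * ψ s = sqrtRatioSum αbar γ s := by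
    rw [hψ s (by omega), sqrtRatioSum, ← mul_assoc,
      mul_one_div_cancel (Real.sqrt_pos.mpr (by linarith)).ne', one_mul]
  have hν0 : ν (s + 1) = 0 := by
    rw [hν _ ht2, Nat.add_sub_cancel, mul_assoc (1 - α (s + 1)), hψs, hkey, sub_self, zero_div]
  exact ⟨hν0, fun _ _ _ => by rw [hν0, zero_smul, add_zero]⟩
end

section
/- (Correctness of Algorithm 1, the balanced-φ,ψ strategy.) Define γ̂_1 = 1 and recursively γ̂_t = ((1−α_t) √ᾱ_{t−1} / (α_t (1−ᾱ_{t−1}))) Σ_{i=1}^{t−1} γ̂_i / √ᾱ_{i−1} for t = 2,…,T, and set ψ̂_T = (1/√(1−ᾱ_T)) Σ_{i=1}^T √(ᾱ_T/ᾱ_{i−1}) γ̂_i. Then γ̂_t > 0 for all t (so ψ̂_T > 0), and the rescaled coefficients γ_t := γ̂_t / ψ̂_T satisfy φ_t = ψ_t for all t = 1,…,T and ψ_T = 1. -/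
/-!
Both `φ_t` and `ψ_t` are linear in `γ`, so it suffices to check `φ_t = ψ_t` for `γ̂`. With
`P_s = ∑_{i ≤ s} γ̂_i / √ᾱ_{i-1}` and `ᾱ_t = ᾱ_{t-1} α_t` one has
`√(1 - ᾱ_t) ψ_t = √ᾱ_t (P_{t-1} + γ̂_t / √ᾱ_{t-1})`, so `φ_t = ψ_t` amounts to
`α_t (1 - ᾱ_{t-1}) γ̂_t = (1 - α_t) √ᾱ_{t-1} P_{t-1}`: for `t = 1` both sides vanish
(`ᾱ_0 = 1`, `P_0 = 0`), and for `t ≥ 2` this is the recursion defining `γ̂_t`. The recursion has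
positive coefficients, so `γ̂_t > 0` by strong induction, and dividing by `ψ̂_T` normalises `ψ_T`
to `1`.
-/

open Finset

theorem prod_range_succ_pos {α : ℕ → ℝ} {t : ℕ} (h0 : α 0 = 1)
    (hα : ∀ i, 1 ≤ i → i ≤ t → 0 < α i) : 0 < ∏ i ∈ range (t + 1), α i :=
  prod_pos fun i hi => by
    rcases i.eq_zero_or_pos with rfl | hi0
    · simp [h0]
    · exact hα i hi0 (by simp only [mem_range] at hi; omega)

theorem prod_range_succ_lt_one {α : ℕ → ℝ} {t : ℕ} (h0 : α 0 = 1)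
    (hα : ∀ i, 1 ≤ i → i ≤ t → 0 < α i ∧ α i < 1) (ht : 1 ≤ t) :
    ∏ i ∈ range (t + 1), α i < 1 := by
  have hmem : ∀ i ∈ range t, 0 ≤ α i ∧ α i ≤ 1 := fun i hi => by
    rcases i.eq_zero_or_pos with rfl | hi0
    · simp [h0]
    · obtain ⟨hpos, hlt⟩ := hα i hi0 (by simp only [mem_range] at hi; omega)
      exact ⟨hpos.le, hlt.le⟩
  have hle := prod_le_one (fun i hi => (hmem i hi).1) (fun i hi => (hmem i hi).2)
  obtain ⟨hpos, hlt⟩ := hα t ht le_rfl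
  calc ∏ i ∈ range (t + 1), α i = (∏ i ∈ range t, α i) * α t := prod_range_succ _ _
    _ ≤ 1 * α t := mul_le_mul_of_nonneg_right hle hpos.le
    _ < 1 := by rwa [one_mul]

theorem sum_sqrt_div_mul_eq_sqrt_mul_sum {ι : Type*} (s : Finset ι) {x : ℝ} (hx : 0 ≤ x)
    (y g : ι → ℝ) : ∑ i ∈ s, √(x / y i) * g i = √x * ∑ i ∈ s, g i / √(y i) := by
  rw [mul_sum]
  refine sum_congr rfl fun i _ => ?_
  rw [Real.sqrt_div hx]
  ring

theorem sqrt_mul_one_sub_mul_div_mul_eq {a b g P : ℝ} (ha1 : a < 1) (hb : 0 < b)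
    (h : a * (1 - b) * g = (1 - a) * √b * P) :
    √a * (1 - b * a) / (1 - a) * g = √(b * a) * (P + g / √b) := by
  rw [Real.sqrt_mul hb.le]
  field_simp [(sub_pos.2 ha1).ne']
  linear_combination √a * h

theorem sqrt_mul_one_sub_div_mul_eq_sum_of_recursion {T : ℕ} {α αbar g : ℕ → ℝ}
    (hα0 : α 0 = 1) (hα : ∀ t, 1 ≤ t → t ≤ T → 0 < α t ∧ α t < 1)
    (hαbar : ∀ t, αbar t = ∏ i ∈ range (t + 1), α i)
    (hrec : ∀ t, 2 ≤ t → t ≤ T → g t = (1 - α t) * √(αbar (t - 1)) /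
      (α t * (1 - αbar (t - 1))) * ∑ i ∈ Icc 1 (t - 1), g i / √(αbar (i - 1))) :
    ∀ t, 1 ≤ t → t ≤ T →
      √(α t) * (1 - αbar t) / (1 - α t) * g t = ∑ i ∈ Icc 1 t, √(αbar t / αbar (i - 1)) * g i := by
  intro t ht1 htT
  obtain ⟨s, rfl⟩ : ∃ s, t = s + 1 := ⟨t - 1, by omega⟩
  obtain ⟨ha, ha1⟩ := hα (s + 1) ht1 htT
  have hb : 0 < αbar s :=
    hαbar s ▸ prod_range_succ_pos hα0 fun i h1 h2 => (hα i h1 (by omega)).1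
  have hsucc : αbar (s + 1) = αbar s * α (s + 1) := by rw [hαbar, hαbar, prod_range_succ]
  rw [sum_sqrt_div_mul_eq_sqrt_mul_sum _ (by rw [hsucc]; exact (mul_pos hb ha).le),
    sum_Icc_succ_top (by omega), Nat.add_sub_cancel, hsucc]
  refine sqrt_mul_one_sub_mul_div_mul_eq ha1 hb ?_
  rcases s.eq_zero_or_pos with rfl | hs
  · simp [hαbar, hα0]
  · have hb1 : αbar s < 1 :=
      hαbar s ▸ prod_range_succ_lt_one hα0 (fun i h1 h2 => hα i h1 (by omega)) hs
    rw [hrec (s + 1) (by omega) htT, Nat.add_sub_cancel]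
    field_simp [(sub_pos.2 hb1).ne']

theorem pos_of_eq_mul_sum_div {T : ℕ} {g c w : ℕ → ℝ} (h1 : 0 < g 1)
    (hc : ∀ t, 2 ≤ t → t ≤ T → 0 < c t) (hw : ∀ i, 1 ≤ i → i < T → 0 < w i)
    (hrec : ∀ t, 2 ≤ t → t ≤ T → g t = c t * ∑ i ∈ Icc 1 (t - 1), g i / w i) :
    ∀ t, 1 ≤ t → t ≤ T → 0 < g t := by
  intro t
  induction t using Nat.strong_induction_on with
  | _ t ih =>
    intro ht1 htT
    obtain rfl | ht2 := ht1.eq_or_lt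
    · exact h1
    rw [hrec t ht2 htT]
    refine mul_pos (hc t ht2 htT) (sum_pos (fun i hi => ?_) ⟨1, by simp only [mem_Icc]; omega⟩)
    rw [mem_Icc] at hi
    exact div_pos (ih i (by omega) hi.1 (by omega)) (hw i hi.1 (by omega))

/-- Correctness of Algorithm 1 (the balanced-φ,ψ strategy): the recursively constructed
γ̂_t are positive (hence ψ̂_T > 0), and the rescaled coefficients γ_t = γ̂_t / ψ̂_T
satisfy φ_t = ψ_t for all 1 ≤ t ≤ T and ψ_T = 1. -/
theorem algorithm1_correct
    (T : ℕ) (hT : 1 ≤ T) (β α αbar γhat γ φ ψ : ℕ → ℝ) (ψhatT : ℝ)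
    (hβ : ∀ t, 1 ≤ t → t ≤ T → 0 < β t ∧ β t < 1)
    (hα0 : α 0 = 1)
    (hα : ∀ t, 1 ≤ t → α t = 1 - β t)
    (hαbar : ∀ t, αbar t = ∏ i ∈ Finset.range (t + 1), α i)
    (hγhat1 : γhat 1 = 1)
    (hγhat : ∀ t, 2 ≤ t → t ≤ T →
      γhat t = (1 - α t) * Real.sqrt (αbar (t - 1)) / (α t * (1 - αbar (t - 1))) *
        ∑ i ∈ Finset.Icc 1 (t - 1), γhat i / Real.sqrt (αbar (i - 1)))
    (hψhatT : ψhatT = (1 / Real.sqrt (1 - αbar T)) *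
      ∑ i ∈ Finset.Icc 1 T, Real.sqrt (αbar T / αbar (i - 1)) * γhat i)
    (hγ : ∀ t, 1 ≤ t → t ≤ T → γ t = γhat t / ψhatT)
    (hφ : ∀ t, 1 ≤ t →
      φ t = Real.sqrt (α t) * Real.sqrt (1 - αbar t) / (1 - α t) * γ t)
    (hψ : ∀ t, 1 ≤ t → ψ t = (1 / Real.sqrt (1 - αbar t)) *
      ∑ i ∈ Finset.Icc 1 t, Real.sqrt (αbar t / αbar (i - 1)) * γ i) :
    (∀ t, 1 ≤ t → t ≤ T → 0 < γhat t) ∧ 0 < ψhatT ∧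
    (∀ t, 1 ≤ t → t ≤ T → φ t = ψ t) ∧ ψ T = 1 := by
  have hα_bounds : ∀ t, 1 ≤ t → t ≤ T → 0 < α t ∧ α t < 1 := fun t h1 h2 => by
    rw [hα t h1, sub_pos, sub_lt_self_iff]
    exact (hβ t h1 h2).symm
  have hαbar_pos : ∀ t ≤ T, 0 < αbar t := fun t ht =>
    hαbar t ▸ prod_range_succ_pos hα0 fun i h1 h2 => (hα_bounds i h1 (h2.trans ht)).1
  have hαbar_lt_one : ∀ t, 1 ≤ t → t ≤ T → αbar t < 1 := fun t h1 h2 =>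
    hαbar t ▸ prod_range_succ_lt_one hα0 (fun i h1 h2' => hα_bounds i h1 (h2'.trans h2)) h1
  have hbalanced := sqrt_mul_one_sub_div_mul_eq_sum_of_recursion hα0 hα_bounds hαbar hγhat
  have hγhat_pos : ∀ t, 1 ≤ t → t ≤ T → 0 < γhat t := by
    refine pos_of_eq_mul_sum_div (hγhat1 ▸ one_pos) (fun t h2 hT => ?_)
      (fun i _ hi => Real.sqrt_pos.2 (hαbar_pos _ (by omega))) hγhat
    obtain ⟨ha, ha1⟩ := hα_bounds t (by omega) hT
    have hb := hαbar_pos (t - 1) (by omega)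
    have hb1 := sub_pos.2 (hαbar_lt_one (t - 1) (by omega) (by omega))
    have ha1' := sub_pos.2 ha1
    positivity
  have hψhat_pos : 0 < ψhatT := by
    obtain ⟨ha, ha1⟩ := hα_bounds T hT le_rfl
    have hb1 := sub_pos.2 (hαbar_lt_one T hT le_rfl)
    have ha1' := sub_pos.2 ha1
    have hg := hγhat_pos T hT le_rfl
    rw [hψhatT, ← hbalanced T hT le_rfl]
    positivity
  have hsum : ∀ t ≤ T, ∑ i ∈ Icc 1 t, √(αbar t / αbar (i - 1)) * γ i =
      (∑ i ∈ Icc 1 t, √(αbar t / αbar (i - 1)) * γhat i) / ψhatT := fun t ht => by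
    rw [sum_div]
    refine sum_congr rfl fun i hi => ?_
    rw [mem_Icc] at hi
    rw [hγ i hi.1 (hi.2.trans ht), mul_div_assoc]
  refine ⟨hγhat_pos, hψhat_pos, fun t h1 h2 => ?_, ?_⟩
  · have hb1 := sub_pos.2 (hαbar_lt_one t h1 h2)
    rw [hφ t h1, hψ t h1, hsum t h2, ← hbalanced t h1 h2, hγ t h1 h2]
    field_simp
    rw [Real.sq_sqrt hb1.le]
  · rw [hψ T hT, hsum T le_rfl, ← mul_div_assoc, ← hψhatT, div_self hψhat_pos.ne']
end

section
/- (Marginal law of the forward process, scalar version of Eq. (13)–(14).) Fix x_0, ξ ∈ ℝ and σ_0 > 0. Define a sequence of probability measures on ℝ by μ_0 = δ_{x_0} and, for t = 1,…,T, let μ_t be the law of √α_t · (X_{t−1} + γ_t ξ) + E_t, where X_{t−1} has law μ_{t−1} and E_t is an independent Gaussian with mean 0 and variance (1−α_t) σ_0². Then for every t = 1,…,T, μ_t is the Gaussian measure on ℝ with mean √ᾱ_t · x_0 + √(1−ᾱ_t) · ψ_t · ξ and variance (1−ᾱ_t) σ_0². -/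
/-!
Each forward step maps a Gaussian to a Gaussian: an affine image of `N(m, v)` is Gaussian, and
convolving with an independent centred Gaussian adds the variances. Starting from the Dirac mass
`N(x₀, 0)`, induction on `t` shows that `μ t` is Gaussian. Its variance is `(1 - ᾱ_t) σ₀²`, since
`α (1 - ᾱ) + (1 - α) = 1 - ᾱ α`, and its mean is `√ᾱ_t x₀ + S_t ξ`, where the drift sums
`S_t = Σ_{i ≤ t} √(ᾱ_t / ᾱ_{i-1}) γ_i` satisfy `S_{t+1} = √α_{t+1} (S_t + γ_{t+1})`. The
normalisation in `ψ_t` is undone using `ᾱ_t < 1`.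
-/

open Finset MeasureTheory ProbabilityTheory Real
open scoped NNReal

lemma gaussianReal_map_mul_add_conv (m d c : ℝ) (v w : ℝ≥0) :
    (gaussianReal m v).map (fun x => c * (x + d)) ∗ gaussianReal 0 w =
      gaussianReal (c * (m + d)) (.mk (c ^ 2) (sq_nonneg c) * v + w) := by
  have hcomp : (fun x : ℝ => c * (x + d)) = (c * ·) ∘ (· + d) := rfl
  rw [hcomp, ← Measure.map_map (by fun_prop) (by fun_prop), gaussianReal_map_add_const,
    gaussianReal_map_const_mul, gaussianReal_conv_gaussianReal, add_zero]

lemma gaussianReal_forward_step {a b m d s : ℝ} (ha : 0 ≤ a) (ha1 : a ≤ 1) (hb : b ≤ 1)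
    (hs : 0 ≤ s) :
    (gaussianReal m ((1 - b) * s).toNNReal).map (fun x => √a * (x + d)) ∗
        gaussianReal 0 ((1 - a) * s).toNNReal =
      gaussianReal (√a * (m + d)) ((1 - b * a) * s).toNNReal := by
  rw [gaussianReal_map_mul_add_conv]
  congr 1
  have hba : b * a ≤ 1 := by nlinarith
  apply NNReal.eq
  push_cast [NNReal.coe_mk, Real.sq_sqrt ha, Real.coe_toNNReal _ (mul_nonneg (sub_nonneg.2 hb) hs),
    Real.coe_toNNReal _ (mul_nonneg (sub_nonneg.2 ha1) hs),
    Real.coe_toNNReal _ (mul_nonneg (sub_nonneg.2 hba) hs)]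
  ring

noncomputable def driftSum (αbar γ : ℕ → ℝ) (t : ℕ) : ℝ :=
  ∑ i ∈ Icc 1 t, √(αbar t / αbar (i - 1)) * γ i

lemma driftSum_zero (αbar γ : ℕ → ℝ) : driftSum αbar γ 0 = 0 := by
  simp [driftSum]

section Schedule

variable {T : ℕ} {α αbar : ℕ → ℝ}

lemma alphaBar_pos_and_le_one (hα : ∀ t, 1 ≤ t → t ≤ T → 0 < α t ∧ α t ≤ 1)
    (hαbar0 : αbar 0 = 1) (hαbar_succ : ∀ t, αbar (t + 1) = αbar t * α (t + 1)) :
    ∀ t ≤ T, 0 < αbar t ∧ αbar t ≤ 1 := by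
  intro t
  induction t with
  | zero => simp [hαbar0]
  | succ t ih =>
    intro hT
    obtain ⟨hpos, hle⟩ := ih (by omega)
    obtain ⟨hαpos, hαle⟩ := hα (t + 1) (by omega) hT
    rw [hαbar_succ]
    exact ⟨mul_pos hpos hαpos, mul_le_one₀ hle hαpos.le hαle⟩

lemma driftSum_succ (γ : ℕ → ℝ) {t : ℕ} {a : ℝ} (ha : 0 ≤ a) (hαbar : αbar t ≠ 0)
    (hαbar_succ : αbar (t + 1) = αbar t * a) :
    driftSum αbar γ (t + 1) = √a * (driftSum αbar γ t + γ (t + 1)) := by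
  rw [driftSum, driftSum, sum_Icc_succ_top (by omega), mul_add, mul_sum, Nat.add_sub_cancel,
    hαbar_succ, mul_div_cancel_left₀ _ hαbar]
  congr 1
  refine sum_congr rfl fun i _ => ?_
  rw [mul_comm (αbar t), mul_div_assoc, Real.sqrt_mul ha, mul_assoc]

lemma marginal_eq_gaussianReal (γ : ℕ → ℝ) (x₀ ξ σ₀ : ℝ) (μ : ℕ → Measure ℝ)
    (hα : ∀ t, 1 ≤ t → t ≤ T → 0 < α t ∧ α t ≤ 1)
    (hαbar0 : αbar 0 = 1) (hαbar_succ : ∀ t, αbar (t + 1) = αbar t * α (t + 1))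
    (hμ0 : μ 0 = Measure.dirac x₀)
    (hμ : ∀ t, 1 ≤ t → t ≤ T →
      μ t = (μ (t - 1)).map (fun x => √(α t) * (x + γ t * ξ)) ∗
        gaussianReal 0 ((1 - α t) * σ₀ ^ 2).toNNReal) :
    ∀ t ≤ T, μ t = gaussianReal (√(αbar t) * x₀ + driftSum αbar γ t * ξ)
      ((1 - αbar t) * σ₀ ^ 2).toNNReal := by
  intro t
  induction t with
  | zero => simp [hμ0, hαbar0, driftSum_zero]
  | succ t ih =>
    intro hT
    obtain ⟨hαpos, hαle⟩ := hα (t + 1) (by omega) hT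
    obtain ⟨hαbar_pos, hαbar_le⟩ := alphaBar_pos_and_le_one hα hαbar0 hαbar_succ t (by omega)
    rw [hμ (t + 1) (by omega) hT, Nat.add_sub_cancel, ih (by omega),
      gaussianReal_forward_step hαpos.le hαle hαbar_le (sq_nonneg σ₀),
      driftSum_succ γ hαpos.le hαbar_pos.ne' (hαbar_succ t), hαbar_succ, Real.sqrt_mul hαbar_pos.le]
    ring_nf

end Schedule

theorem forward_marginal_gaussian_general
    (T : ℕ) (β α αbar γ ψ : ℕ → ℝ)
    (hβ : ∀ t, 1 ≤ t → t ≤ T → 0 < β t ∧ β t < 1)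
    (hα0 : α 0 = 1)
    (hα : ∀ t, 1 ≤ t → α t = 1 - β t)
    (hαbar : ∀ t, αbar t = ∏ i ∈ Finset.range (t + 1), α i)
    (hψ : ∀ t, 1 ≤ t → ψ t = (1 / Real.sqrt (1 - αbar t)) *
      ∑ i ∈ Finset.Icc 1 t, Real.sqrt (αbar t / αbar (i - 1)) * γ i)
    (x₀ ξ σ₀ : ℝ)
    (μ : ℕ → Measure ℝ)
    (hμ0 : μ 0 = Measure.dirac x₀)
    (hμ : ∀ t, 1 ≤ t → t ≤ T →
      μ t = Measure.conv
        (Measure.map (fun x => Real.sqrt (α t) * (x + γ t * ξ)) (μ (t - 1)))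
        (gaussianReal 0 (((1 - α t) * σ₀ ^ 2).toNNReal))) :
    ∀ t, 1 ≤ t → t ≤ T →
      μ t = gaussianReal (Real.sqrt (αbar t) * x₀ + Real.sqrt (1 - αbar t) * ψ t * ξ)
        (((1 - αbar t) * σ₀ ^ 2).toNNReal) := by
  have hα_mem : ∀ t, 1 ≤ t → t ≤ T → 0 < α t ∧ α t < 1 := fun t h1 hT => by
    obtain ⟨hβpos, hβlt⟩ := hβ t h1 hT
    rw [hα t h1]
    constructor <;> linarith
  have hα_Ioc : ∀ t, 1 ≤ t → t ≤ T → 0 < α t ∧ α t ≤ 1 := fun t h1 hT =>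
    ⟨(hα_mem t h1 hT).1, (hα_mem t h1 hT).2.le⟩
  have hαbar0 : αbar 0 = 1 := by simp [hαbar, hα0]
  have hαbar_succ : ∀ t, αbar (t + 1) = αbar t * α (t + 1) := fun t => by
    rw [hαbar, hαbar, prod_range_succ]
  intro t h1 hT
  have hαbar_lt : αbar t < 1 := by
    obtain ⟨s, rfl⟩ : ∃ s, t = s + 1 := ⟨t - 1, by omega⟩
    obtain ⟨hpos, hle⟩ := alphaBar_pos_and_le_one hα_Ioc hαbar0 hαbar_succ s (by omega)
    rw [hαbar_succ]
    nlinarith [hα_mem (s + 1) h1 hT]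
  have hsqrt_ne : √(1 - αbar t) ≠ 0 := Real.sqrt_ne_zero'.2 (by linarith)
  rw [marginal_eq_gaussianReal γ x₀ ξ σ₀ μ hα_Ioc hαbar0 hαbar_succ hμ0 hμ t hT, hψ t h1,
    ← driftSum]
  field_simp

/-- Marginal law of the forward process (scalar version of Eqs. (13)–(14)):
starting from μ_0 = δ_{x_0} and setting μ_t to be the law of
√α_t (X_{t−1} + γ_t ξ) + E_t with X_{t−1} ~ μ_{t−1} independent of the Gaussian
E_t ~ N(0, (1−α_t)σ_0²), one has μ_t = N(√ᾱ_t x_0 + √(1−ᾱ_t) ψ_t ξ, (1−ᾱ_t)σ_0²). -/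
theorem forward_marginal_gaussian
    (T : ℕ) (β α αbar γ ψ : ℕ → ℝ)
    (hβ : ∀ t, 1 ≤ t → t ≤ T → 0 < β t ∧ β t < 1)
    (hα0 : α 0 = 1)
    (hα : ∀ t, 1 ≤ t → α t = 1 - β t)
    (hαbar : ∀ t, αbar t = ∏ i ∈ Finset.range (t + 1), α i)
    (hψ : ∀ t, 1 ≤ t → ψ t = (1 / Real.sqrt (1 - αbar t)) *
      ∑ i ∈ Finset.Icc 1 t, Real.sqrt (αbar t / αbar (i - 1)) * γ i)
    (x₀ ξ σ₀ : ℝ) (hσ₀ : 0 < σ₀)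
    (μ : ℕ → Measure ℝ)
    (hμ0 : μ 0 = Measure.dirac x₀)
    (hμ : ∀ t, 1 ≤ t → t ≤ T →
      μ t = Measure.conv
        (Measure.map (fun x => Real.sqrt (α t) * (x + γ t * ξ)) (μ (t - 1)))
        (gaussianReal 0 (((1 - α t) * σ₀ ^ 2).toNNReal))) :
    ∀ t, 1 ≤ t → t ≤ T →
      μ t = gaussianReal (Real.sqrt (αbar t) * x₀ + Real.sqrt (1 - αbar t) * ψ t * ξ)
        (((1 - αbar t) * σ₀ ^ 2).toNNReal) :=
  forward_marginal_gaussian_general T β α αbar γ ψ hβ hα0 hα hαbar hψ x₀ ξ σ₀ μ hμ0 hμ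
end

section
/- (Gaussian posterior identity, scalar version of Eqs. (25)–(28).) Fix t with 2 ≤ t ≤ T, reals x_0, ξ, σ_0 with σ_0 > 0, and let g(m, v)(x) = (2πv)^{−1/2} exp(−(x−m)²/(2v)) denote the Gaussian density. Set μ̃_t(x_t, x_0, ξ) = (√α_t (1−ᾱ_{t−1})/(1−ᾱ_t)) x_t + ((1−α_t)√ᾱ_{t−1}/(1−ᾱ_t)) x_0 + ν_t ξ and β̃_t = ((1−α_t)(1−ᾱ_{t−1})/(1−ᾱ_t)) σ_0². Then for all x_t, x_{t−1} ∈ ℝ: g(√α_t (x_{t−1} + γ_t ξ), (1−α_t) σ_0²)(x_t) · g(√ᾱ_{t−1} x_0 + √(1−ᾱ_{t−1}) ψ_{t−1} ξ, (1−ᾱ_{t−1}) σ_0²)(x_{t−1}) = g(μ̃_t(x_t, x_0, ξ), β̃_t)(x_{t−1}) · g(√ᾱ_t x_0 + √(1−ᾱ_t) ψ_t ξ, (1−ᾱ_t) σ_0²)(x_t). -/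
open Finset

/-- Gaussian density with mean m and variance v. -/
noncomputable def gaussDensity (m v x : ℝ) : ℝ :=
  (Real.sqrt (2 * Real.pi * v))⁻¹ * Real.exp (-(x - m) ^ 2 / (2 * v))

/-!
The forward kernel is Gaussian with mean linear in `x_{t-1}`, so completing the square in
`x_{t-1}` splits the joint density into a Gaussian in `x_{t-1}` (the posterior) times a Gaussian
in `x_t` (the marginal). The marginal has the parameters prescribed at time `t` because
`ᾱ_t = ᾱ_{t-1} α_t` and `√(1 - ᾱ_t) ψ_t = √α_t (√(1 - ᾱ_{t-1}) ψ_{t-1} + γ_t)`.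
-/

theorem gaussDensity_mul_gaussDensity (a b m u w x y : ℝ) (hu : 0 < u) (hw : 0 < w) :
    gaussDensity (a * y + b) u x * gaussDensity m w y =
      gaussDensity ((a * w * (x - b) + u * m) / (a ^ 2 * w + u)) (u * w / (a ^ 2 * w + u)) y *
        gaussDensity (a * m + b) (a ^ 2 * w + u) x := by
  have hv : 0 < a ^ 2 * w + u := by positivity
  have hπ := Real.pi_pos
  unfold gaussDensity
  rw [mul_mul_mul_comm, mul_mul_mul_comm _ (Real.exp _), ← mul_inv, ← mul_inv,
    ← Real.sqrt_mul (by positivity), ← Real.sqrt_mul (by positivity), ← Real.exp_add,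
    ← Real.exp_add]
  congr 2
  · field_simp
  · field_simp
    ring

theorem gaussDensity_transition_mul_marginal {a b σ : ℝ} (ha : 0 < a) (ha1 : a < 1) (hb : 0 < b)
    (hb1 : b < 1) (hσ : 0 < σ) (c γ x₀ ξ x y : ℝ) :
    gaussDensity (Real.sqrt a * (y + γ * ξ)) ((1 - a) * σ ^ 2) x *
        gaussDensity (Real.sqrt b * x₀ + c * ξ) ((1 - b) * σ ^ 2) y =
      gaussDensity (Real.sqrt a * (1 - b) / (1 - b * a) * x
          + (1 - a) * Real.sqrt b / (1 - b * a) * x₀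
          + ((1 - a) * c - a * (1 - b) * γ) / (1 - b * a) * ξ)
          ((1 - a) * (1 - b) / (1 - b * a) * σ ^ 2) y *
        gaussDensity (Real.sqrt (b * a) * x₀ + Real.sqrt a * (c + γ) * ξ)
          ((1 - b * a) * σ ^ 2) x := by
  have hab : 0 < 1 - b * a := by nlinarith
  have hsa := Real.sq_sqrt ha.le
  have hvar : Real.sqrt a ^ 2 * ((1 - b) * σ ^ 2) + (1 - a) * σ ^ 2 = (1 - b * a) * σ ^ 2 := by
    rw [hsa]; ring
  have hu : 0 < (1 - a) * σ ^ 2 := mul_pos (sub_pos.2 ha1) (pow_pos hσ 2)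
  have hw : 0 < (1 - b) * σ ^ 2 := mul_pos (sub_pos.2 hb1) (pow_pos hσ 2)
  have key := gaussDensity_mul_gaussDensity (Real.sqrt a) (Real.sqrt a * γ * ξ)
    (Real.sqrt b * x₀ + c * ξ) ((1 - a) * σ ^ 2) ((1 - b) * σ ^ 2) x y hu hw
  rw [hvar] at key
  convert key using 3
  · ring
  · field_simp
    linear_combination (1 - b) * γ * ξ * hsa
  · field_simp
  · rw [Real.sqrt_mul hb.le]
    ring

theorem sum_Icc_sqrt_div_mul_succ_s10 {a : ℕ → ℝ} (γ : ℕ → ℝ) {c : ℝ} (t : ℕ)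
    (hsucc : a (t + 1) = a t * c) (hc : 0 ≤ c) (ht : a t ≠ 0) :
    ∑ i ∈ Icc 1 (t + 1), Real.sqrt (a (t + 1) / a (i - 1)) * γ i =
      Real.sqrt c * (∑ i ∈ Icc 1 t, Real.sqrt (a t / a (i - 1)) * γ i + γ (t + 1)) := by
  have hterm (i : ℕ) :
      Real.sqrt (a (t + 1) / a (i - 1)) = Real.sqrt c * Real.sqrt (a t / a (i - 1)) := by
    rw [hsucc, mul_comm, mul_div_assoc, Real.sqrt_mul hc]
  simp only [sum_Icc_succ_top (Nat.le_add_left 1 t), hterm, Nat.add_sub_cancel, div_self ht,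
    Real.sqrt_one, one_mul, mul_add, mul_sum, mul_assoc]

section Schedule

variable {T : ℕ} {α αbar : ℕ → ℝ} (hαbar : ∀ t, αbar t = ∏ i ∈ range (t + 1), α i)
include hαbar

theorem alphaBar_succ (t : ℕ) : αbar (t + 1) = αbar t * α (t + 1) := by
  rw [hαbar, hαbar, prod_range_succ]

variable (hα0 : α 0 = 1) (hα : ∀ t, 1 ≤ t → t ≤ T → 0 < α t ∧ α t < 1)
include hα0 hα

theorem alphaBar_pos_and_le_one_s10 {t : ℕ} (ht : t ≤ T) : 0 < αbar t ∧ αbar t ≤ 1 := by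
  induction t with
  | zero => simp [hαbar, hα0]
  | succ n ih =>
    obtain ⟨hpos, hle⟩ := ih (by omega)
    obtain ⟨hα_pos, hα_lt⟩ := hα (n + 1) (by omega) ht
    rw [alphaBar_succ hαbar]
    exact ⟨by positivity, by nlinarith⟩

theorem alphaBar_lt_one {t : ℕ} (ht1 : 1 ≤ t) (ht : t ≤ T) : αbar t < 1 := by
  obtain ⟨n, rfl⟩ := Nat.exists_eq_add_of_le' ht1
  obtain ⟨hpos, hle⟩ := alphaBar_pos_and_le_one_s10 hαbar hα0 hα (t := n) (by omega)
  obtain ⟨hα_pos, hα_lt⟩ := hα (n + 1) (by omega) ht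
  rw [alphaBar_succ hαbar]
  nlinarith

theorem sqrt_one_sub_alphaBar_mul_psi_succ {γ ψ : ℕ → ℝ}
    (hψ : ∀ t, 1 ≤ t → ψ t = (1 / Real.sqrt (1 - αbar t)) *
      ∑ i ∈ Icc 1 t, Real.sqrt (αbar t / αbar (i - 1)) * γ i)
    {t : ℕ} (ht1 : 1 ≤ t) (htT : t + 1 ≤ T) :
    Real.sqrt (1 - αbar (t + 1)) * ψ (t + 1) =
      Real.sqrt (α (t + 1)) * (Real.sqrt (1 - αbar t) * ψ t + γ (t + 1)) := by
  have hunscale {u : ℕ} (hu1 : 1 ≤ u) (huT : u ≤ T) :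
      Real.sqrt (1 - αbar u) * ψ u = ∑ i ∈ Icc 1 u, Real.sqrt (αbar u / αbar (i - 1)) * γ i := by
    have : 0 < Real.sqrt (1 - αbar u) :=
      Real.sqrt_pos.2 (sub_pos.2 (alphaBar_lt_one hαbar hα0 hα hu1 huT))
    rw [hψ u hu1]
    field_simp
  rw [hunscale (by omega) htT, hunscale ht1 (by omega)]
  exact sum_Icc_sqrt_div_mul_succ_s10 γ t (alphaBar_succ hαbar t) (hα (t + 1) (by omega) htT).1.le
    (alphaBar_pos_and_le_one_s10 hαbar hα0 hα (by omega)).1.ne'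

end Schedule

/-- Gaussian posterior identity (scalar version of Eqs. (25)–(28)):
q(x_t | x_{t−1}, ξ) q(x_{t−1} | x_0, ξ) = q(x_{t−1} | x_t, x_0, ξ) q(x_t | x_0, ξ). -/
theorem gaussian_posterior_identity
    (T : ℕ) (β α αbar γ ψ ν : ℕ → ℝ)
    (hβ : ∀ t, 1 ≤ t → t ≤ T → 0 < β t ∧ β t < 1)
    (hα0 : α 0 = 1)
    (hα : ∀ t, 1 ≤ t → α t = 1 - β t)
    (hαbar : ∀ t, αbar t = ∏ i ∈ Finset.range (t + 1), α i)
    (hψ : ∀ t, 1 ≤ t → ψ t = (1 / Real.sqrt (1 - αbar t)) *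
      ∑ i ∈ Finset.Icc 1 t, Real.sqrt (αbar t / αbar (i - 1)) * γ i)
    (hν : ∀ t, 2 ≤ t → ν t =
      ((1 - α t) * Real.sqrt (1 - αbar (t - 1)) * ψ (t - 1)
        - α t * (1 - αbar (t - 1)) * γ t) / (1 - αbar t))
    (t : ℕ) (ht2 : 2 ≤ t) (htT : t ≤ T)
    (x₀ ξ σ₀ : ℝ) (hσ₀ : 0 < σ₀) :
    ∀ xt xtm1 : ℝ,
      gaussDensity (Real.sqrt (α t) * (xtm1 + γ t * ξ)) ((1 - α t) * σ₀ ^ 2) xt *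
        gaussDensity (Real.sqrt (αbar (t - 1)) * x₀
            + Real.sqrt (1 - αbar (t - 1)) * ψ (t - 1) * ξ)
          ((1 - αbar (t - 1)) * σ₀ ^ 2) xtm1
      = gaussDensity
          (Real.sqrt (α t) * (1 - αbar (t - 1)) / (1 - αbar t) * xt
            + (1 - α t) * Real.sqrt (αbar (t - 1)) / (1 - αbar t) * x₀
            + ν t * ξ)
          ((1 - α t) * (1 - αbar (t - 1)) / (1 - αbar t) * σ₀ ^ 2) xtm1 *
        gaussDensity (Real.sqrt (αbar t) * x₀ + Real.sqrt (1 - αbar t) * ψ t * ξ)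
          ((1 - αbar t) * σ₀ ^ 2) xt := by
  intro xt xtm1
  have hα_mem (t : ℕ) (ht1 : 1 ≤ t) (htT : t ≤ T) : 0 < α t ∧ α t < 1 := by
    obtain ⟨hβ_pos, hβ_lt⟩ := hβ t ht1 htT
    rw [hα t ht1]
    constructor <;> linarith
  obtain ⟨n, rfl⟩ := Nat.exists_eq_add_of_le' (show 1 ≤ t by omega)
  obtain ⟨hαpos, hαlt⟩ := hα_mem (n + 1) (by omega) htT
  have hbar_pos := (alphaBar_pos_and_le_one_s10 hαbar hα0 hα_mem (t := n) (by omega)).1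
  have hbar_lt := alphaBar_lt_one hαbar hα0 hα_mem (t := n) (by omega) (by omega)
  rw [hν (n + 1) ht2, sqrt_one_sub_alphaBar_mul_psi_succ hαbar hα0 hα_mem hψ (by omega) htT,
    alphaBar_succ hαbar n, Nat.add_sub_cancel]
  convert gaussDensity_transition_mul_marginal hαpos hαlt hbar_pos hbar_lt hσ₀
    (Real.sqrt (1 - αbar n) * ψ n) (γ (n + 1)) x₀ ξ xt xtm1 using 4
  ring
end
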